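/- arXiv:0802.0791 — 4 statements merged into one kernel-verified Lean document; each statement's English description precedes it below -/
import Mathlib

section
/- Fix μ ≥ 0. The function F : ℝ → ℝ defined by F(k) = ∫₀^1 β^{-2} exp(−1/β) exp(−β μ² k²) dβ is real-analytic on all of ℝ. -/
/-!
Since `e^x ≥ x² / 2`, the weight `β⁻² e^{-1/β}` is bounded by `2` on `(0, 1]`, so it is the density
of a finite measure on `(0, 1]`, and `F(k)` is the moment generating function of `β ↦ -β` under
this measure, evaluated at `μ² k²`. The moment generating function of a bounded random variable
is finite everywhere, hence analytic on all of `ℝ`.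
-/

open MeasureTheory ProbabilityTheory Real Set

section

variable {Ω : Type*} {m : MeasurableSpace Ω} {μ : Measure Ω} {X : Ω → ℝ}

lemma integrableExpSet_eq_univ_of_ae_abs_le [IsFiniteMeasure μ] (hX : AEMeasurable X μ) {R : ℝ}
    (hR : ∀ᵐ ω ∂μ, |X ω| ≤ R) : integrableExpSet X μ = univ := by
  refine eq_univ_of_forall fun t ↦ ?_
  refine Integrable.of_bound (hX.const_mul t).exp.aestronglyMeasurable (exp (|t| * R)) ?_
  filter_upwards [hR] with ω hω
  rw [norm_eq_abs, abs_exp, exp_le_exp]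
  calc t * X ω ≤ |t * X ω| := le_abs_self _
    _ = |t| * |X ω| := abs_mul _ _
    _ ≤ |t| * R := mul_le_mul_of_nonneg_left hω (abs_nonneg t)

lemma analyticOnNhd_integral_mul_exp_mul {g : Ω → ℝ} (hg : Integrable g μ) (hg0 : 0 ≤ᵐ[μ] g)
    (hX : AEMeasurable X μ) {R : ℝ} (hR : ∀ᵐ ω ∂μ, |X ω| ≤ R) :
    AnalyticOnNhd ℝ (fun t ↦ ∫ ω, g ω * exp (t * X ω) ∂μ) univ := by
  set ν := μ.withDensity fun ω ↦ ENNReal.ofReal (g ω)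
  have : IsFiniteMeasure ν := isFiniteMeasure_withDensity_ofReal hg.2
  have hν : ∀ t, ∫ ω, g ω * exp (t * X ω) ∂μ = mgf X ν t := fun t ↦ by
    rw [mgf, integral_withDensity_eq_integral_toReal_smul₀ hg.1.aemeasurable.ennreal_ofReal
      (.of_forall fun _ ↦ ENNReal.ofReal_lt_top)]
    refine integral_congr_ae ?_
    filter_upwards [hg0] with ω hω
    rw [ENNReal.toReal_ofReal hω, smul_eq_mul]
  have hνμ : ν ≪ μ := withDensity_absolutelyContinuous μ _
  have h := analyticOnNhd_mgf (X := X) (μ := ν)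
  rwa [integrableExpSet_eq_univ_of_ae_abs_le (hX.mono_ac hνμ) (hνμ.ae_le hR), interior_univ,
    ← funext hν] at h

end

lemma zpow_neg_two_mul_exp_neg_inv_le_two {β : ℝ} (hβ : 0 < β) :
    β ^ (-2 : ℤ) * exp (-1 / β) ≤ 2 := by
  have h := pow_div_factorial_le_exp (x := β⁻¹) (inv_nonneg.2 hβ.le) 2
  have h_eq : β ^ (-2 : ℤ) * exp (-1 / β) = β⁻¹ ^ 2 / exp β⁻¹ := by
    rw [zpow_neg, neg_div, one_div, exp_neg, inv_pow, div_eq_mul_inv, zpow_ofNat]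
  rw [h_eq, div_le_iff₀ (exp_pos _)]
  rw [Nat.factorial_two, Nat.cast_two, div_le_iff₀ two_pos] at h
  linarith

lemma integrableOn_zpow_neg_two_mul_exp_neg_inv_Ioc (b : ℝ) :
    IntegrableOn (fun β : ℝ ↦ β ^ (-2 : ℤ) * exp (-1 / β)) (Ioc 0 b) := by
  refine IntegrableOn.of_bound measure_Ioc_lt_top (by fun_prop) 2
    (ae_restrict_of_forall_mem measurableSet_Ioc fun β hβ ↦ ?_)
  rw [norm_of_nonneg (by positivity)]
  exact zpow_neg_two_mul_exp_neg_inv_le_two hβ.1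

theorem tadpole_small_alpha_analytic_general (μ : ℝ) :
    AnalyticOnNhd ℝ
      (fun k : ℝ =>
        ∫ β in (0 : ℝ)..1, β ^ (-2 : ℤ) * Real.exp (-1 / β) * Real.exp (-β * μ ^ 2 * k ^ 2))
      Set.univ := by
  have hL := analyticOnNhd_integral_mul_exp_mul
    (integrableOn_zpow_neg_two_mul_exp_neg_inv_Ioc 1)
    (.of_forall fun β ↦ by positivity) measurable_neg.aemeasurable (R := 1)
    (ae_restrict_of_forall_mem measurableSet_Ioc fun β hβ ↦ by
      rw [abs_neg, abs_of_pos hβ.1]; exact hβ.2)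
  have hsq : AnalyticOnNhd ℝ (fun k : ℝ ↦ μ ^ 2 * k ^ 2) univ := fun k _ ↦ by fun_prop
  refine (hL.comp hsq (mapsTo_univ _ _)).congr isOpen_univ fun k _ ↦ ?_
  rw [intervalIntegral.integral_of_le zero_le_one]
  refine integral_congr_ae (.of_forall fun β ↦ ?_)
  ring_nf

/-- The function `F(k) = ∫₀^1 β⁻² e^{-1/β} e^{-βμ²k²} dβ`, appearing in the
small-`α` contribution `F(k)/k²` of the non-planar tadpole, is real-analytic
on all of `ℝ`. -/
theorem tadpole_small_alpha_analytic (μ : ℝ) (hμ : 0 ≤ μ) :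
    AnalyticOnNhd ℝ
      (fun k : ℝ =>
        ∫ β in (0 : ℝ)..1, β ^ (-2 : ℤ) * Real.exp (-1 / β) * Real.exp (-β * μ ^ 2 * k ^ 2))
      Set.univ :=
  tadpole_small_alpha_analytic_general μ
end

section
/- Let μ > 0 and define T(k) = ∫₀^{k^{-2}} α^{-2} exp(−k²/α) exp(−α μ²) dα for k > 0. There exist real constants c, c′ and C > 0 such that for all k with 0 < k ≤ min(1, 1/μ), one has |T(k) − c/k² − c′ log(k²)| ≤ C. That is, the non-planar tadpole amplitude has the form T(k) = c/k² + c′ log(k²) + F(k) with F bounded near k = 0, exhibiting UV/IR mixing. -/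
/-!
Write `a = k²`, `m = μ²`. The kernel `α⁻² e^{-a/α}` has primitive `a⁻¹ e^{-a/α}`, which vanishes
as `α → 0⁺`, so without the mass factor the amplitude is exactly `a⁻¹ e^{-a²} = 1/k² + O(1)`.
The mass correction `α⁻² e^{-a/α} (e^{-αm} - 1)` is at most `m/a` on `(0, a]` and at most `α⁻²` on
`[1, a⁻¹]`, while on `[a, 1]` it differs from `-m/α` by at most `m a α⁻² + m²`. All of these
integrate to `O(1)`, except `-m/α` over `[a, 1]`, which gives `m log a = μ² log k²`.
-/

open MeasureTheory Real Set Filter Topology intervalIntegral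

lemma Real.exp_neg_le_inv {x : ℝ} (hx : 0 < x) : exp (-x) ≤ x⁻¹ := by
  rw [exp_neg]
  exact inv_anti₀ hx (by linarith [add_one_le_exp x])

lemma Real.exp_neg_le_two_div_sq {x : ℝ} (hx : 0 < x) : exp (-x) ≤ 2 / x ^ 2 := by
  rw [exp_neg, ← one_div, div_le_div_iff₀ (exp_pos x) (by positivity)]
  nlinarith [quadratic_le_exp_of_nonneg hx.le]

lemma Real.exp_neg_div_le_one {a α : ℝ} (ha : 0 ≤ a) (hα : 0 < α) : exp (-a / α) ≤ 1 :=
  exp_le_one_iff.2 (div_nonpos_of_nonpos_of_nonneg (neg_nonpos.2 ha) hα.le)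

lemma Real.abs_exp_neg_sub_one_le {x : ℝ} (hx : 0 ≤ x) : |exp (-x) - 1| ≤ min x 1 := by
  rw [abs_of_nonpos (by simpa using hx)]
  exact le_min (by linarith [one_sub_le_exp_neg x]) (by linarith [exp_pos (-x)])

lemma Real.abs_exp_neg_sub_one_add_le {x : ℝ} (hx : 0 ≤ x) : |exp (-x) - 1 + x| ≤ x ^ 2 := by
  have h₁ := one_sub_le_exp_neg x
  -- `e^{-x} - 1 + x ≤ x (1 - e^{-x}) ≤ x²`, the first step being `1 + x ≤ e^x` times `e^{-x}`
  have h₂ : (1 + x) * exp (-x) ≤ 1 := by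
    calc (1 + x) * exp (-x) ≤ exp x * exp (-x) := by gcongr; linarith [add_one_le_exp x]
      _ = 1 := by rw [← exp_add, add_neg_cancel, exp_zero]
  rw [abs_of_nonneg (by linarith)]
  nlinarith

section
variable {c d : ℝ}

lemma intervalIntegrable_inv_sq (hc : 0 < c) (hcd : c ≤ d) :
    IntervalIntegrable (fun α : ℝ => (α ^ 2)⁻¹) volume c d :=
  intervalIntegrable_inv (fun α hα => (pow_pos (hc.trans_le (uIcc_of_le hcd ▸ hα).1) 2).ne')
    (by fun_prop)

lemma integral_inv_sq (hc : 0 < c) (hcd : c ≤ d) : ∫ α in c..d, (α ^ 2)⁻¹ = c⁻¹ - d⁻¹ := by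
  have hpos : ∀ α ∈ uIcc c d, 0 < α := fun α hα => hc.trans_le (uIcc_of_le hcd ▸ hα).1
  rw [integral_eq_sub_of_hasDerivAt (f := fun α => -α⁻¹) (f' := fun α => (α ^ 2)⁻¹)
    (fun α hα => by simpa using (hasDerivAt_inv (hpos α hα).ne').fun_neg)
    (intervalIntegrable_inv_sq hc hcd)]
  ring

end

noncomputable def tadpoleKernel (a α : ℝ) : ℝ := (α ^ 2)⁻¹ * exp (-a / α)

lemma tadpoleKernel_nonneg (a α : ℝ) : 0 ≤ tadpoleKernel a α := by
  unfold tadpoleKernel; positivity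

section
variable {a : ℝ}

lemma hasDerivAt_inv_mul_exp_neg_div (ha : a ≠ 0) {α : ℝ} (hα : α ≠ 0) :
    HasDerivAt (fun α => a⁻¹ * exp (-a / α)) (tadpoleKernel a α) α := by
  have h := (((hasDerivAt_inv hα).const_mul (-a)).exp).const_mul a⁻¹
  simp only [← div_eq_mul_inv] at h
  refine h.congr_deriv ?_
  rw [tadpoleKernel, div_eq_mul_inv]
  field_simp

lemma tendsto_exp_neg_div_nhdsGT_zero (ha : 0 < a) :
    Tendsto (fun α => exp (-a / α)) (𝓝[>] 0) (𝓝 0) := by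
  refine tendsto_exp_atBot.comp ?_
  have h := tendsto_neg_atTop_atBot.comp (tendsto_inv_nhdsGT_zero.const_mul_atTop ha)
  refine h.congr fun α => ?_
  simp [div_eq_mul_inv]

lemma tadpoleKernel_le (ha : 0 < a) {α : ℝ} (hα : 0 < α) : tadpoleKernel a α ≤ 2 / a ^ 2 := by
  have h := exp_neg_le_two_div_sq (div_pos ha hα)
  rw [← neg_div] at h
  calc tadpoleKernel a α ≤ (α ^ 2)⁻¹ * (2 / (a / α) ^ 2) := by
        rw [tadpoleKernel]; gcongr
    _ = 2 / a ^ 2 := by field_simp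

lemma intervalIntegrable_tadpoleKernel (ha : 0 < a) {b : ℝ} (hb : 0 ≤ b) :
    IntervalIntegrable (tadpoleKernel a) volume 0 b := by
  rw [intervalIntegrable_iff_integrableOn_Ioc_of_le hb]
  have hcont : ContinuousOn (tadpoleKernel a) (Ioc 0 b) := fun α hα =>
    ((continuousAt_id.pow 2).inv₀ (pow_pos hα.1 2).ne' |>.mul
      (continuousAt_const.div continuousAt_id hα.1.ne').rexp).continuousWithinAt
  refine .of_bound measure_Ioc_lt_top (hcont.aestronglyMeasurable measurableSet_Ioc) (2 / a ^ 2) ?_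
  filter_upwards [ae_restrict_mem measurableSet_Ioc] with α hα
  rw [norm_of_nonneg (tadpoleKernel_nonneg a α)]
  exact tadpoleKernel_le ha hα.1

lemma integral_tadpoleKernel (ha : 0 < a) {b : ℝ} (hb : 0 < b) :
    ∫ α in 0..b, tadpoleKernel a α = a⁻¹ * exp (-a / b) := by
  have hlim₀ : Tendsto (fun α => a⁻¹ * exp (-a / α)) (𝓝[>] 0) (𝓝 0) := by
    simpa using (tendsto_exp_neg_div_nhdsGT_zero ha).const_mul a⁻¹
  have hlim_b : Tendsto (fun α => a⁻¹ * exp (-a / α)) (𝓝[<] b) (𝓝 (a⁻¹ * exp (-a / b))) :=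
    ((continuousAt_const.div continuousAt_id hb.ne').rexp.const_mul a⁻¹).tendsto.mono_left
      nhdsWithin_le_nhds
  rw [integral_eq_sub_of_hasDerivAt_of_tendsto hb
    (fun α hα => hasDerivAt_inv_mul_exp_neg_div ha.ne' hα.1.ne')
    (intervalIntegrable_tadpoleKernel ha hb.le) hlim₀ hlim_b, sub_zero]

variable {m : ℝ}

noncomputable def massCorrection (a m α : ℝ) : ℝ := tadpoleKernel a α * (exp (-α * m) - 1)

lemma intervalIntegrable_massCorrection (ha : 0 < a) {b : ℝ} (hb : 0 ≤ b) :
    IntervalIntegrable (massCorrection a m) volume 0 b :=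
  (intervalIntegrable_tadpoleKernel ha hb).mul_continuousOn (by fun_prop)

lemma abs_massCorrection_le_div (ha : 0 < a) (hm : 0 ≤ m) {α : ℝ} (hα : 0 < α) :
    |massCorrection a m α| ≤ m / a := by
  have hE : exp (-a / α) ≤ α / a := by
    simpa [neg_div, inv_div] using exp_neg_le_inv (div_pos ha hα)
  have hD : |exp (-α * m) - 1| ≤ α * m := by
    simpa [neg_mul] using (abs_exp_neg_sub_one_le (mul_nonneg hα.le hm)).trans (min_le_left _ _)
  calc |massCorrection a m α| = (α ^ 2)⁻¹ * exp (-a / α) * |exp (-α * m) - 1| := by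
        rw [massCorrection, tadpoleKernel, abs_mul, abs_of_nonneg (by positivity)]
    _ ≤ (α ^ 2)⁻¹ * (α / a) * (α * m) := by gcongr
    _ = m / a := by field_simp

lemma abs_massCorrection_le_inv_sq (ha : 0 ≤ a) (hm : 0 ≤ m) {α : ℝ} (hα : 0 < α) :
    |massCorrection a m α| ≤ (α ^ 2)⁻¹ := by
  have hD : |exp (-α * m) - 1| ≤ 1 := by
    simpa [neg_mul] using (abs_exp_neg_sub_one_le (mul_nonneg hα.le hm)).trans (min_le_right _ _)
  calc |massCorrection a m α| = (α ^ 2)⁻¹ * exp (-a / α) * |exp (-α * m) - 1| := by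
        rw [massCorrection, tadpoleKernel, abs_mul, abs_of_nonneg (by positivity)]
    _ ≤ (α ^ 2)⁻¹ * 1 * 1 := by gcongr; exact exp_neg_div_le_one ha hα
    _ = (α ^ 2)⁻¹ := by ring

lemma abs_massCorrection_add_le (ha : 0 ≤ a) (hm : 0 ≤ m) {α : ℝ} (hα : 0 < α) :
    |massCorrection a m α + m * α⁻¹| ≤ m * a * (α ^ 2)⁻¹ + m ^ 2 := by
  have hE₀ : 0 ≤ exp (-a / α) := (exp_pos _).le
  have hE₁ : exp (-a / α) ≤ 1 := exp_neg_div_le_one ha hα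
  have hE : 1 - exp (-a / α) ≤ a / α := by linarith [neg_div α a ▸ one_sub_le_exp_neg (a / α)]
  have hT : |exp (-α * m) - 1 + α * m| ≤ (α * m) ^ 2 := by
    simpa [neg_mul] using abs_exp_neg_sub_one_add_le (mul_nonneg hα.le hm)
  have hsplit : massCorrection a m α + m * α⁻¹ = (α ^ 2)⁻¹ * exp (-a / α) *
      (exp (-α * m) - 1 + α * m) + m * α⁻¹ * (1 - exp (-a / α)) := by
    rw [massCorrection, tadpoleKernel]; field_simp; ring
  rw [hsplit]
  generalize exp (-a / α) = E at hE₀ hE₁ hE ⊢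
  calc |(α ^ 2)⁻¹ * E * (exp (-α * m) - 1 + α * m) + m * α⁻¹ * (1 - E)|
      ≤ (α ^ 2)⁻¹ * E * |exp (-α * m) - 1 + α * m| + m * α⁻¹ * (1 - E) := by
        refine (abs_add_le _ _).trans_eq ?_
        rw [abs_mul, abs_mul (m * α⁻¹), abs_of_nonneg (by positivity : 0 ≤ (α ^ 2)⁻¹ * E),
          abs_of_nonneg (by positivity : 0 ≤ m * α⁻¹), abs_of_nonneg (by linarith : 0 ≤ 1 - E)]
    _ ≤ (α ^ 2)⁻¹ * 1 * (α * m) ^ 2 + m * α⁻¹ * (a / α) := by gcongr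
    _ = m * a * (α ^ 2)⁻¹ + m ^ 2 := by field_simp; ring

lemma abs_integral_massCorrection_zero_le (ha : 0 < a) (hm : 0 ≤ m) :
    |∫ α in 0..a, massCorrection a m α| ≤ m := by
  have h := norm_integral_le_of_norm_le_const (a := 0) (b := a) (C := m / a)
    (f := massCorrection a m) fun α hα => abs_massCorrection_le_div ha hm (uIoc_of_le ha.le ▸ hα).1
  rwa [Real.norm_eq_abs, sub_zero, abs_of_pos ha, div_mul_cancel₀ m ha.ne'] at h

lemma abs_integral_massCorrection_add_inv_le (ha : 0 < a) (ha1 : a ≤ 1) (hm : 0 ≤ m) :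
    |∫ α in a..1, (massCorrection a m α + m * α⁻¹)| ≤ m + m ^ 2 := by
  have hbound : IntervalIntegrable (fun α => m * a * (α ^ 2)⁻¹ + m ^ 2) volume a 1 :=
    ((intervalIntegrable_inv_sq ha ha1).const_mul _).add intervalIntegrable_const
  have h := norm_integral_le_of_norm_le (f := fun α => massCorrection a m α + m * α⁻¹) ha1
    (ae_of_all _ fun α hα => abs_massCorrection_add_le ha.le hm (ha.trans hα.1)) hbound
  rw [integral_add ((intervalIntegrable_inv_sq ha ha1).const_mul _) intervalIntegrable_const,
    intervalIntegral.integral_const_mul, integral_inv_sq ha ha1, intervalIntegral.integral_const,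
    smul_eq_mul] at h
  refine (Real.norm_eq_abs _ ▸ h).trans ?_
  have : m * a * (a⁻¹ - 1⁻¹) = m * (1 - a) := by field_simp
  nlinarith

lemma abs_integral_massCorrection_one_le (ha : 0 ≤ a) (hm : 0 ≤ m) {b : ℝ} (hb : 1 ≤ b) :
    |∫ α in 1..b, massCorrection a m α| ≤ 1 := by
  have h := norm_integral_le_of_norm_le (f := massCorrection a m) hb
    (ae_of_all _ fun α hα => abs_massCorrection_le_inv_sq ha hm (one_pos.trans hα.1))
    (intervalIntegrable_inv_sq one_pos hb)
  rw [integral_inv_sq one_pos hb] at h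
  refine (Real.norm_eq_abs _ ▸ h).trans ?_
  linarith [inv_nonneg.2 (zero_le_one.trans hb)]

lemma abs_integral_tadpoleKernel_sub_inv_le (ha : 0 < a) (ha1 : a ≤ 1) :
    |(∫ α in 0..a⁻¹, tadpoleKernel a α) - a⁻¹| ≤ 1 := by
  have hD := (abs_exp_neg_sub_one_le (sq_nonneg a)).trans (min_le_left _ _)
  rw [integral_tadpoleKernel ha (inv_pos.2 ha), div_inv_eq_mul, neg_mul, ← sq, ← mul_sub_one,
    abs_mul, abs_of_pos (inv_pos.2 ha)]
  calc a⁻¹ * |exp (-a ^ 2) - 1| ≤ a⁻¹ * a ^ 2 := by gcongr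
    _ = a := by field_simp
    _ ≤ 1 := ha1

lemma abs_integral_tadpole_sub_le (ha : 0 < a) (ha1 : a ≤ 1) (hm : 0 ≤ m) :
    |(∫ α in 0..a⁻¹, tadpoleKernel a α * exp (-α * m)) - a⁻¹ - m * log a| ≤ 2 + 2 * m + m ^ 2 := by
  have hK : 1 ≤ a⁻¹ := (one_le_inv₀ ha).2 ha1
  have hint : ∀ {b c}, 0 ≤ b → 0 ≤ c → IntervalIntegrable (massCorrection a m) volume b c :=
    fun hb hc => (intervalIntegrable_massCorrection ha hb).symm.trans
      (intervalIntegrable_massCorrection ha hc)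
  have hinv : IntervalIntegrable (fun α => m * α⁻¹) volume a 1 :=
    (intervalIntegrable_inv (fun α hα => (ha.trans_le (uIcc_of_le ha1 ▸ hα).1).ne')
      continuousOn_id).const_mul m
  have hmass : ∫ α in 0..a⁻¹, tadpoleKernel a α * exp (-α * m)
      = (∫ α in 0..a⁻¹, tadpoleKernel a α) + ∫ α in 0..a⁻¹, massCorrection a m α := by
    rw [← integral_add (intervalIntegrable_tadpoleKernel ha (by positivity))
      (hint le_rfl (by positivity))]
    congr 1 with α
    rw [massCorrection]; ring
  have hsplit : ∫ α in 0..a⁻¹, massCorrection a m α = (∫ α in 0..a, massCorrection a m α)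
      + (∫ α in a..1, massCorrection a m α) + ∫ α in 1..a⁻¹, massCorrection a m α := by
    rw [integral_add_adjacent_intervals (hint le_rfl ha.le) (hint ha.le zero_le_one),
      integral_add_adjacent_intervals (hint le_rfl zero_le_one) (hint zero_le_one (by positivity))]
  have hlog : ∫ α in a..1, massCorrection a m α
      = (∫ α in a..1, (massCorrection a m α + m * α⁻¹)) + m * log a := by
    rw [integral_add (hint ha.le zero_le_one) hinv, intervalIntegral.integral_const_mul,
      integral_inv_of_pos ha one_pos, one_div, log_inv]
    ring
  have h₀ := abs_integral_tadpoleKernel_sub_inv_le ha ha1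
  have h₁ := abs_integral_massCorrection_zero_le ha hm
  have h₂ := abs_integral_massCorrection_add_inv_le ha ha1 hm
  have h₃ := abs_integral_massCorrection_one_le ha.le hm hK
  rw [hmass, hsplit, hlog]
  set I₀ := ∫ α in 0..a⁻¹, tadpoleKernel a α
  set I₁ := ∫ α in 0..a, massCorrection a m α
  set I₂ := ∫ α in a..1, (massCorrection a m α + m * α⁻¹)
  set I₃ := ∫ α in 1..a⁻¹, massCorrection a m α
  calc _ = |(I₀ - a⁻¹) + I₁ + I₂ + I₃| := by congr 1; ring
    _ ≤ |I₀ - a⁻¹| + |I₁| + |I₂| + |I₃| :=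
        (abs_add_le _ _).trans (add_le_add_left (abs_add_three _ _ _) _)
    _ ≤ 1 + m + (m + m ^ 2) + 1 := by gcongr
    _ = 2 + 2 * m + m ^ 2 := by ring

end

theorem nonplanar_tadpole_UV_IR_mixing_general (μ : ℝ) :
    ∃ c c' : ℝ, ∃ C > (0 : ℝ), ∀ k : ℝ, 0 < k → k ≤ min 1 (1 / μ) →
      |(∫ α in (0 : ℝ)..((k ^ 2)⁻¹),
            α ^ (-2 : ℤ) * Real.exp (-k ^ 2 / α) * Real.exp (-α * μ ^ 2))
          - c / k ^ 2 - c' * Real.log (k ^ 2)| ≤ C := by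
  refine ⟨1, μ ^ 2, 2 + 2 * μ ^ 2 + (μ ^ 2) ^ 2, by positivity, fun k hk hkμ => ?_⟩
  have hk1 : k ^ 2 ≤ 1 := pow_le_one₀ hk.le (hkμ.trans (min_le_left _ _))
  simpa only [tadpoleKernel, zpow_neg, zpow_ofNat, one_div] using
    abs_integral_tadpole_sub_le (pow_pos hk 2) hk1 (sq_nonneg μ)

/-- UV/IR mixing of the naive noncommutative `φ⁴` model: the non-planar tadpole
amplitude `T(k) = ∫₀^{k⁻²} α⁻² e^{-k²/α} e^{-αμ²} dα` behaves as
`T(k) = c/k² + c′ log(k²) + O(1)` for small external momentum `k`. -/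
theorem nonplanar_tadpole_UV_IR_mixing (μ : ℝ) (hμ : 0 < μ) :
    ∃ c c' : ℝ, ∃ C > (0 : ℝ), ∀ k : ℝ, 0 < k → k ≤ min 1 (1 / μ) →
      |(∫ α in (0 : ℝ)..((k ^ 2)⁻¹),
            α ^ (-2 : ℤ) * Real.exp (-k ^ 2 / α) * Real.exp (-α * μ ^ 2))
          - c / k ^ 2 - c' * Real.log (k ^ 2)| ≤ C :=
  nonplanar_tadpole_UV_IR_mixing_general μ
end

section
/- Let α₁, α₂ > 0. Then ∫_{ℝ⁴} ∫_{ℝ⁴} exp(i ω(p,q)) exp(−α₁‖p‖²) exp(−α₂‖q‖²) dp dq = 16π⁴/(1 + 4α₁α₂)². In particular this oscillatory double Gaussian integral is bounded by 16π⁴ uniformly in α₁ and α₂, whereas bounding the integrand in absolute value would only give (π/α₁)²(π/α₂)². -/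
open MeasureTheory
open scoped Real
open Complex
open scoped RealInnerProductSpace

/-- The Moyal oscillation phase `ω(p,q) = p∧q` on four-dimensional Moyal space
with `θ = 1`. -/
noncomputable def moyalPhase (p q : EuclideanSpace ℝ (Fin 4)) : ℝ :=
  p 0 * q 1 - p 1 * q 0 + p 2 * q 3 - p 3 * q 2


noncomputable def moyalJ (p : EuclideanSpace ℝ (Fin 4)) : EuclideanSpace ℝ (Fin 4) :=
  (WithLp.equiv 2 _).symm ![-p 1, p 0, -p 3, p 2]

lemma moyalJ_inner (p q : EuclideanSpace ℝ (Fin 4)) : ⟪moyalJ p, q⟫ = moyalPhase p q := by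
  simp [moyalJ, PiLp.inner_apply, Fin.sum_univ_four, moyalPhase]; ring

lemma moyalJ_norm (p : EuclideanSpace ℝ (Fin 4)) : ‖moyalJ p‖ = ‖p‖ := by
  simp [moyalJ, EuclideanSpace.norm_eq, Fin.sum_univ_four, sq_abs]; ring_nf

lemma inner_gauss (α₂ : ℝ) (h₂ : 0 < α₂) (p : EuclideanSpace ℝ (Fin 4)) :
    ∫ q : EuclideanSpace ℝ (Fin 4), cexp (-(α₂:ℂ) * ‖q‖^2 + I * ⟪moyalJ p, q⟫) =
      ((π / α₂ : ℝ) : ℂ) ^ (2 : ℕ) * cexp (-(‖p‖:ℂ)^2 / (4 * α₂)) := by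
  rw [GaussianFourier.integral_cexp_neg_mul_sq_norm_add (by simpa using h₂) I (moyalJ p)]
  have hd : Module.finrank ℝ (EuclideanSpace ℝ (Fin 4)) = 4 := by simp
  rw [hd, moyalJ_norm]
  rw [show (((4:ℕ):ℂ)/2) = ((2:ℕ):ℂ) by norm_num, cpow_natCast]
  congr 1
  · push_cast; ring
  · congr 1; rw [I_sq]; ring

/-- The oscillatory double Gaussian integral coupling two loop momenta of a
non-planar graph:
`∫∫ e^{iω(p,q)} e^{-α₁‖p‖²} e^{-α₂‖q‖²} dp dq = 16π⁴/(1+4α₁α₂)²`;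
in particular it is bounded by `16π⁴` uniformly in `α₁, α₂`. -/
theorem oscillatory_double_gaussian (α₁ α₂ : ℝ) (h₁ : 0 < α₁) (h₂ : 0 < α₂) :
    (∫ p : EuclideanSpace ℝ (Fin 4), ∫ q : EuclideanSpace ℝ (Fin 4),
        Complex.exp (Complex.I * (moyalPhase p q : ℂ)) *
          Real.exp (-α₁ * ‖p‖ ^ 2) * Real.exp (-α₂ * ‖q‖ ^ 2))
      = ((16 * π ^ 4 / (1 + 4 * α₁ * α₂) ^ 2 : ℝ) : ℂ) ∧
    ‖∫ p : EuclideanSpace ℝ (Fin 4), ∫ q : EuclideanSpace ℝ (Fin 4),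
        Complex.exp (Complex.I * (moyalPhase p q : ℂ)) *
          Real.exp (-α₁ * ‖p‖ ^ 2) * Real.exp (-α₂ * ‖q‖ ^ 2)‖
      ≤ 16 * π ^ 4 := by
  set β : ℝ := α₁ + 1 / (4 * α₂) with hβ
  have hβpos : 0 < β := by positivity
  have key : (∫ p : EuclideanSpace ℝ (Fin 4), ∫ q : EuclideanSpace ℝ (Fin 4),
        Complex.exp (Complex.I * (moyalPhase p q : ℂ)) *
          Real.exp (-α₁ * ‖p‖ ^ 2) * Real.exp (-α₂ * ‖q‖ ^ 2))
      = ((16 * π ^ 4 / (1 + 4 * α₁ * α₂) ^ 2 : ℝ) : ℂ) := by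
    have hinner : ∀ p : EuclideanSpace ℝ (Fin 4),
        (∫ q : EuclideanSpace ℝ (Fin 4),
          Complex.exp (Complex.I * (moyalPhase p q : ℂ)) *
            Real.exp (-α₁ * ‖p‖ ^ 2) * Real.exp (-α₂ * ‖q‖ ^ 2))
        = ((π / α₂ : ℝ) : ℂ) ^ (2 : ℕ) *
            ((Real.exp (-α₁ * ‖p‖ ^ 2) : ℝ) : ℂ) * cexp (-(‖p‖:ℂ)^2 / (4 * α₂)) := by
      intro p
      have : (fun q : EuclideanSpace ℝ (Fin 4) =>
          Complex.exp (Complex.I * (moyalPhase p q : ℂ)) *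
            (Real.exp (-α₁ * ‖p‖ ^ 2) : ℂ) * (Real.exp (-α₂ * ‖q‖ ^ 2) : ℂ))
          = fun q => ((Real.exp (-α₁ * ‖p‖ ^ 2) : ℝ) : ℂ) •
              cexp (-(α₂:ℂ) * ‖q‖^2 + I * ⟪moyalJ p, q⟫) := by
        funext q
        rw [moyalJ_inner, smul_eq_mul, Complex.exp_add, Complex.ofReal_exp,
          Complex.ofReal_exp]
        push_cast
        ring
      rw [this, integral_smul, inner_gauss α₂ h₂ p, smul_eq_mul]
      ring
    simp_rw [hinner]
    have houter : (fun p : EuclideanSpace ℝ (Fin 4) =>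
        ((π / α₂ : ℝ) : ℂ) ^ (2 : ℕ) *
            ((Real.exp (-α₁ * ‖p‖ ^ 2) : ℝ) : ℂ) * cexp (-(‖p‖:ℂ)^2 / (4 * α₂)))
        = fun p => ((π / α₂ : ℝ) : ℂ) ^ (2 : ℕ) • cexp (-(β:ℂ) * ‖p‖^2) := by
      funext p
      rw [smul_eq_mul, mul_assoc, Complex.ofReal_exp, ← Complex.exp_add]
      congr 2
      push_cast [hβ]
      have : (α₂ : ℂ) ≠ 0 := by exact_mod_cast h₂.ne'
      field_simp
      ring
    rw [houter, integral_smul, GaussianFourier.integral_cexp_neg_mul_sq_norm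
      (by simpa using hβpos)]
    have hd : Module.finrank ℝ (EuclideanSpace ℝ (Fin 4)) = 4 := by simp
    rw [hd, show (((4:ℕ):ℂ)/2) = ((2:ℕ):ℂ) by norm_num, cpow_natCast, smul_eq_mul]
    have hne : (1 + 4 * α₁ * α₂) ≠ 0 := by positivity
    rw [show ((π:ℂ) / (β:ℂ)) = (((π / β : ℝ)) : ℂ) by push_cast; ring]
    rw [← Complex.ofReal_pow, ← Complex.ofReal_pow, ← Complex.ofReal_mul]
    norm_cast
    rw [hβ]
    field_simp
    ring
  refine ⟨key, ?_⟩
  rw [key, Complex.norm_real]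
  have hd1 : (1:ℝ) ≤ (1 + 4 * α₁ * α₂) ^ 2 := by nlinarith [mul_pos h₁ h₂, sq_nonneg (α₁*α₂)]
  rw [Real.norm_eq_abs]
  have habs : |16 * π ^ 4 / (1 + 4 * α₁ * α₂) ^ 2| = 16 * π ^ 4 / (1 + 4 * α₁ * α₂) ^ 2 :=
    abs_of_nonneg (by positivity)
  rw [habs]
  calc 16 * π ^ 4 / (1 + 4 * α₁ * α₂) ^ 2 ≤ 16 * π ^ 4 / 1 := by
        apply div_le_div_of_nonneg_left (by positivity) one_pos hd1
    _ = 16 * π ^ 4 := by ring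
end

section
/- Let a ≥ 0 and μ ≥ 0. There exists a constant K > 0 such that for all α₁, α₂ ∈ (0, 1], the oscillatory integral I(α₁, α₂) = ∫_{ℝ⁴} ∫_{ℝ⁴} exp(i ω(p,q)) exp(−α₁(‖p‖² + a/‖p‖² + μ²)) exp(−α₂(‖q‖² + a/‖q‖² + μ²)) dp dq satisfies |I(α₁, α₂)| ≤ K. -/
/-!
Write each sliced propagator as `e^{-αμ²} (g_α - h_α)`, with `g_α = e^{-α‖v‖²}` a Gaussian and
`h_α = e^{-α‖v‖²} (1 - e^{-αa/‖v‖²})` a defect with `0 ≤ h_α ≤ 1`. In four dimensions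
`h_α ≤ α a e^{-α‖v‖²} / ‖v‖²` has an `L¹` norm bounded independently of `α`. Since the Moyal phase
is `⟪J p, q⟫` for an orthogonal `J`, integrating the oscillating factor against a Gaussian
produces the Fourier transform `(π/α)² e^{-‖p‖²/4α}`, whose integral is `(2π)⁴` whatever `α`.
Expanding the double integral by bilinearity, every term contains either a Gaussian (bounded by
`(2π)⁴`) or two defects (bounded by the product of their `L¹` norms).
-/

open MeasureTheory

open Real Complex Set Module Function
open scoped RealInnerProductSpace

noncomputable section

section OscillatoryPairing

variable {V : Type*} [NormedAddCommGroup V] [InnerProductSpace ℝ V] [FiniteDimensional ℝ V]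
  [MeasurableSpace V] [BorelSpace V]

def oscillatoryPairing (φ : V → V → ℝ) (f g : V → ℝ) : ℂ :=
  ∫ p, ∫ q, cexp (I * φ p q) * f p * g q

variable {φ : V → V → ℝ} {f g h : V → ℝ}

lemma integrable_oscillatoryPairing_kernel (hφ : Measurable (uncurry φ)) (hf : Integrable f)
    (hg : Integrable g) :
    Integrable (fun z : V × V => cexp (I * φ z.1 z.2) * f z.1 * g z.2) (volume.prod volume) := by
  simp_rw [mul_assoc]
  refine (hf.ofReal.mul_prod hg.ofReal).bdd_mul (c := 1) (by fun_prop) (ae_of_all _ fun z => ?_)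
  rw [norm_exp_I_mul_ofReal]

lemma oscillatoryPairing_eq_integral_prod (hφ : Measurable (uncurry φ)) (hf : Integrable f)
    (hg : Integrable g) :
    oscillatoryPairing φ f g
      = ∫ z : V × V, cexp (I * φ z.1 z.2) * f z.1 * g z.2 ∂(volume.prod volume) :=
  (integral_prod _ (integrable_oscillatoryPairing_kernel hφ hf hg)).symm

lemma oscillatoryPairing_mul_sub_right (c : ℝ) (hφ : Measurable (uncurry φ)) (hf : Integrable f)
    (hg : Integrable g) (hh : Integrable h) :
    oscillatoryPairing φ f (fun q => c * (g q - h q))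
      = c * (oscillatoryPairing φ f g - oscillatoryPairing φ f h) := by
  have hgh : Integrable (fun q => c * (g q - h q)) := (hg.sub hh).const_mul c
  rw [oscillatoryPairing_eq_integral_prod hφ hf hgh,
    oscillatoryPairing_eq_integral_prod hφ hf hg, oscillatoryPairing_eq_integral_prod hφ hf hh,
    ← integral_sub (integrable_oscillatoryPairing_kernel hφ hf hg)
      (integrable_oscillatoryPairing_kernel hφ hf hh),
    ← integral_const_mul]
  congr with z
  push_cast
  ring

lemma oscillatoryPairing_comm (hφ : Measurable (uncurry φ)) (hf : Integrable f)
    (hg : Integrable g) :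
    oscillatoryPairing φ f g = oscillatoryPairing (fun q p => φ p q) g f := by
  rw [oscillatoryPairing_eq_integral_prod hφ hf hg,
    oscillatoryPairing_eq_integral_prod (φ := fun q p => φ p q) (hφ.comp measurable_swap) hg hf,
    ← integral_prod_swap]
  congr with z
  simp only [Prod.fst_swap, Prod.snd_swap]
  ring

lemma oscillatoryPairing_mul_sub_left (c : ℝ) (hφ : Measurable (uncurry φ)) (hf : Integrable f)
    (hg : Integrable g) (hh : Integrable h) :
    oscillatoryPairing φ (fun p => c * (f p - g p)) h
      = c * (oscillatoryPairing φ f h - oscillatoryPairing φ g h) := by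
  have hfg : Integrable (fun p => c * (f p - g p)) := (hf.sub hg).const_mul c
  have hφ' : Measurable (uncurry fun q p => φ p q) := hφ.comp measurable_swap
  rw [oscillatoryPairing_comm hφ hfg hh, oscillatoryPairing_comm hφ hf hh,
    oscillatoryPairing_comm hφ hg hh]
  exact oscillatoryPairing_mul_sub_right c hφ' hh hf hg

lemma norm_oscillatoryPairing_le (hf : Integrable f) (hg : Integrable g) :
    ‖oscillatoryPairing φ f g‖ ≤ (∫ p, |f p|) * ∫ q, |g q| := by
  rw [← integral_mul_const]
  refine norm_integral_le_of_norm_le (hf.abs.mul_const _) (ae_of_all _ fun p => ?_)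
  rw [← integral_const_mul]
  refine norm_integral_le_of_norm_le (hg.abs.const_mul _) (ae_of_all _ fun q => ?_)
  simp [norm_exp_I_mul_ofReal]

lemma integrable_exp_neg_mul_sq_norm {α : ℝ} (hα : 0 < α) :
    Integrable fun v : V => rexp (-α * ‖v‖ ^ 2) :=
  .of_integral_ne_zero <| by rw [GaussianFourier.integral_rexp_neg_mul_sq_norm hα]; positivity

lemma integral_cexp_I_inner_mul_exp_neg_mul_sq_norm {α : ℝ} (hα : 0 < α) (w : V) :
    ∫ v, cexp (I * ⟪w, v⟫) * rexp (-α * ‖v‖ ^ 2) =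
      ((π / α) ^ (finrank ℝ V / 2 : ℝ) * rexp (-(4 * α)⁻¹ * ‖w‖ ^ 2) : ℝ) := by
  have := GaussianFourier.integral_cexp_neg_mul_sq_norm_add (V := V) (b := (α : ℂ))
    (by simpa using hα) I w
  convert this using 1
  · congr with v
    rw [ofReal_exp, ← Complex.exp_add]
    push_cast
    ring_nf
  · rw [ofReal_mul, ofReal_cpow (by positivity)]
    push_cast
    congr 2
    rw [I_sq]
    ring

lemma norm_oscillatoryPairing_exp_neg_mul_sq_norm_le (J : V ≃ₗᵢ[ℝ] V) {α : ℝ} (hα : 0 < α)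
    (hf : ∀ p, |f p| ≤ 1) :
    ‖oscillatoryPairing (fun p q => ⟪J p, q⟫) f (fun q => rexp (-α * ‖q‖ ^ 2))‖
      ≤ (2 * π) ^ finrank ℝ V := by
  set G : V → ℝ := fun p => (π / α) ^ (finrank ℝ V / 2 : ℝ) * rexp (-(4 * α)⁻¹ * ‖p‖ ^ 2)
  have hG : ∀ p, 0 ≤ G p := fun p => mul_nonneg (by positivity) (exp_pos _).le
  have hinner : ∀ p, ∫ q, cexp (I * ⟪J p, q⟫) * f p * rexp (-α * ‖q‖ ^ 2) = f p * G p := by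
    intro p
    simp_rw [mul_right_comm _ (f p : ℂ), integral_mul_const,
      integral_cexp_I_inner_mul_exp_neg_mul_sq_norm hα, J.norm_map, G]
    push_cast
    ring
  calc ‖oscillatoryPairing (fun p q => ⟪J p, q⟫) f (fun q => rexp (-α * ‖q‖ ^ 2))‖
      ≤ ∫ p, G p := by
        refine norm_integral_le_of_norm_le
          ((integrable_exp_neg_mul_sq_norm (by positivity)).const_mul _)
          (ae_of_all _ fun p => ?_)
        rw [hinner, norm_mul, norm_real, norm_real, Real.norm_of_nonneg (hG p), Real.norm_eq_abs]
        exact mul_le_of_le_one_left (hG p) (hf p)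
    _ = (2 * π) ^ finrank ℝ V := by
        rw [integral_const_mul, GaussianFourier.integral_rexp_neg_mul_sq_norm (by positivity),
          ← mul_rpow (by positivity) (by positivity),
          show π / α * (π / (4 * α)⁻¹) = (2 * π) ^ (2 : ℝ) by rw [rpow_two]; field_simp; ring,
          ← rpow_mul (by positivity), mul_div_cancel₀ _ two_ne_zero, rpow_natCast]

lemma norm_exp_neg_mul_sq_norm_oscillatoryPairing_le (J : V ≃ₗᵢ[ℝ] V) {α : ℝ} (hα : 0 < α)
    (hg : Integrable g) (hg1 : ∀ q, |g q| ≤ 1) :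
    ‖oscillatoryPairing (fun p q => ⟪J p, q⟫) (fun p => rexp (-α * ‖p‖ ^ 2)) g‖
      ≤ (2 * π) ^ finrank ℝ V := by
  have hJ : Measurable (uncurry fun p q : V => ⟪J p, q⟫) := by fun_prop
  have hflip : (fun q p : V => ⟪J p, q⟫) = fun q p => ⟪J.symm q, p⟫ := by
    ext q p
    rw [J.inner_map_eq_flip, real_inner_comm]
  rw [oscillatoryPairing_comm hJ (integrable_exp_neg_mul_sq_norm hα) hg, hflip]
  exact norm_oscillatoryPairing_exp_neg_mul_sq_norm_le J.symm hα hg1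

end OscillatoryPairing

section SlicedPropagator

def propagatorDefect (α a r : ℝ) : ℝ := rexp (-α * r ^ 2) * (1 - rexp (-(α * a / r ^ 2)))

variable {α a : ℝ}

lemma propagatorDefect_nonneg (hα : 0 ≤ α) (ha : 0 ≤ a) (r : ℝ) :
    0 ≤ propagatorDefect α a r :=
  mul_nonneg (exp_pos _).le <| sub_nonneg.2 <| exp_le_one_iff.2 <| by
    have : 0 ≤ α * a / r ^ 2 := by positivity
    linarith

lemma propagatorDefect_le_exp (α a r : ℝ) : propagatorDefect α a r ≤ rexp (-α * r ^ 2) :=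
  mul_le_of_le_one_right (exp_pos _).le (by linarith [exp_pos (-(α * a / r ^ 2))])

lemma propagatorDefect_le_mul (α a r : ℝ) :
    propagatorDefect α a r ≤ rexp (-α * r ^ 2) * (α * a / r ^ 2) :=
  mul_le_mul_of_nonneg_left (by linarith [add_one_le_exp (-(α * a / r ^ 2))]) (exp_pos _).le

lemma abs_propagatorDefect_le_one (hα : 0 ≤ α) (ha : 0 ≤ a) (r : ℝ) :
    |propagatorDefect α a r| ≤ 1 := by
  rw [abs_of_nonneg (propagatorDefect_nonneg hα ha r)]
  exact (propagatorDefect_le_exp α a r).trans (exp_le_one_iff.2 (by nlinarith [sq_nonneg r]))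

lemma setIntegral_Ioi_mul_exp_neg_mul_sq (hα : 0 < α) :
    ∫ r in Ioi (0 : ℝ), r * rexp (-α * r ^ 2) = (2 * α)⁻¹ := by
  have := integral_rpow_mul_exp_neg_mul_rpow two_pos (by norm_num : (-1 : ℝ) < 1) hα
  norm_num [rpow_neg_one] at this
  simp only [neg_mul]
  rw [this]
  ring

variable {V : Type*} [NormedAddCommGroup V]

def slicedPropagator (α a μ : ℝ) (v : V) : ℝ := rexp (-α * (‖v‖ ^ 2 + a / ‖v‖ ^ 2 + μ ^ 2))

lemma slicedPropagator_eq (α a μ : ℝ) :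
    slicedPropagator α a μ
      = fun v : V => rexp (-α * μ ^ 2) * (rexp (-α * ‖v‖ ^ 2) - propagatorDefect α a ‖v‖) := by
  ext v
  rw [slicedPropagator, propagatorDefect, show -α * (‖v‖ ^ 2 + a / ‖v‖ ^ 2 + μ ^ 2)
      = -(α * a / ‖v‖ ^ 2) + -α * ‖v‖ ^ 2 + -α * μ ^ 2 by ring, Real.exp_add, Real.exp_add]
  ring

lemma abs_slicedPropagator_le_one (hα : 0 ≤ α) (ha : 0 ≤ a) (μ : ℝ) (v : V) :
    |slicedPropagator α a μ v| ≤ 1 := by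
  rw [slicedPropagator, abs_exp, exp_le_one_iff]
  have : 0 ≤ a / ‖v‖ ^ 2 := by positivity
  nlinarith [sq_nonneg ‖v‖, sq_nonneg μ]

variable [InnerProductSpace ℝ V] [FiniteDimensional ℝ V] [MeasurableSpace V] [BorelSpace V]

lemma integrable_propagatorDefect (hα : 0 < α) (ha : 0 ≤ a) :
    Integrable fun v : V => propagatorDefect α a ‖v‖ :=
  (integrable_exp_neg_mul_sq_norm hα).mono' (by unfold propagatorDefect; fun_prop)
    (ae_of_all _ fun v => by
      rw [Real.norm_of_nonneg (propagatorDefect_nonneg hα.le ha _)]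
      exact propagatorDefect_le_exp α a _)

lemma integrable_slicedPropagator (hα : 0 < α) (ha : 0 ≤ a) (μ : ℝ) :
    Integrable (slicedPropagator α a μ : V → ℝ) := by
  rw [slicedPropagator_eq]
  exact ((integrable_exp_neg_mul_sq_norm hα).sub (integrable_propagatorDefect hα ha)).const_mul _

lemma integral_propagatorDefect_le (hV : finrank ℝ V = 4) (hα : 0 < α) (ha : 0 ≤ a) :
    ∫ v : V, propagatorDefect α a ‖v‖ ≤ 2 * a * volume.real (Metric.ball (0 : V) 1) := by
  have : Nontrivial V := nontrivial_of_finrank_eq_succ hV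
  rw [integral_fun_norm_addHaar, hV]
  have hradial : ∫ r in Ioi (0 : ℝ), r ^ 3 * propagatorDefect α a r ≤ a / 2 := by
    calc ∫ r in Ioi (0 : ℝ), r ^ 3 * propagatorDefect α a r
        ≤ ∫ r in Ioi (0 : ℝ), α * a * (r * rexp (-α * r ^ 2)) := by
          refine setIntegral_mono_of_nonneg (fun r hr => ?_) (fun r hr => ?_)
            ((integrable_mul_exp_neg_mul_sq hα).const_mul _).integrableOn
          · have := propagatorDefect_nonneg hα.le ha r
            have : 0 < r := hr
            positivity
          · have hr : 0 < r := hr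
            calc r ^ 3 * propagatorDefect α a r
                ≤ r ^ 3 * (rexp (-α * r ^ 2) * (α * a / r ^ 2)) :=
                  mul_le_mul_of_nonneg_left (propagatorDefect_le_mul α a r) (by positivity)
              _ = α * a * (r * rexp (-α * r ^ 2)) := by field_simp
      _ = a / 2 := by
          rw [integral_const_mul, setIntegral_Ioi_mul_exp_neg_mul_sq hα]
          field_simp
  simp only [Nat.reduceSub, nsmul_eq_mul, smul_eq_mul, Nat.cast_ofNat]
  nlinarith [measureReal_nonneg (μ := (volume : Measure V)) (s := Metric.ball 0 1)]

lemma norm_oscillatoryPairing_propagatorDefect_le (hV : finrank ℝ V = 4) (φ : V → V → ℝ)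
    {α₁ α₂ : ℝ} (hα₁ : 0 < α₁) (hα₂ : 0 < α₂) (ha : 0 ≤ a) :
    ‖oscillatoryPairing φ (fun p => propagatorDefect α₁ a ‖p‖) (fun q => propagatorDefect α₂ a ‖q‖)‖
      ≤ (2 * a * volume.real (Metric.ball (0 : V) 1)) ^ 2 := by
  have hL1 : ∀ α, 0 < α →
      ∫ v : V, |propagatorDefect α a ‖v‖| ≤ 2 * a * volume.real (Metric.ball (0 : V) 1) :=
    fun α hα => by
      simp only [abs_of_nonneg (propagatorDefect_nonneg hα.le ha _)]
      exact integral_propagatorDefect_le hV hα ha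
  refine (norm_oscillatoryPairing_le (integrable_propagatorDefect hα₁ ha)
    (integrable_propagatorDefect hα₂ ha)).trans ?_
  rw [sq]
  exact mul_le_mul (hL1 α₁ hα₁) (hL1 α₂ hα₂) (integral_nonneg fun _ => abs_nonneg _)
    ((integral_nonneg fun _ => abs_nonneg _).trans (hL1 α₁ hα₁))

theorem norm_oscillatoryPairing_slicedPropagator_le (hV : finrank ℝ V = 4) (J : V ≃ₗᵢ[ℝ] V)
    {a μ α₁ α₂ : ℝ} (ha : 0 ≤ a) (hα₁ : 0 < α₁) (hα₂ : 0 < α₂) :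
    ‖oscillatoryPairing (fun p q => ⟪J p, q⟫) (slicedPropagator α₁ a μ) (slicedPropagator α₂ a μ)‖
      ≤ 2 * (2 * π) ^ 4 + (2 * a * volume.real (Metric.ball (0 : V) 1)) ^ 2 := by
  have hφ : Measurable (uncurry fun p q : V => ⟪J p, q⟫) := by fun_prop
  have norm_exp_mul_sub_le :
      ∀ α, 0 ≤ α → ∀ z w : ℂ, ‖(rexp (-α * μ ^ 2) : ℂ) * (z - w)‖ ≤ ‖z‖ + ‖w‖ := by
    intro α hα z w
    rw [norm_mul, norm_real, Real.norm_of_nonneg (exp_pos _).le]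
    refine (mul_le_of_le_one_left (norm_nonneg _) (exp_le_one_iff.2 ?_)).trans (norm_sub_le z w)
    nlinarith [sq_nonneg μ]
  have hF₁ := integrable_slicedPropagator (V := V) hα₁ ha μ
  have hg α (hα : 0 < α) := integrable_exp_neg_mul_sq_norm (V := V) hα
  have hh α (hα : 0 < α) := integrable_propagatorDefect (V := V) hα ha
  have hA := hV ▸ norm_oscillatoryPairing_exp_neg_mul_sq_norm_le J hα₂
    (abs_slicedPropagator_le_one hα₁.le ha μ)
  have hB := hV ▸ norm_exp_neg_mul_sq_norm_oscillatoryPairing_le J hα₁ (hh α₂ hα₂)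
    (fun q => abs_propagatorDefect_le_one hα₂.le ha ‖q‖)
  have hC := norm_oscillatoryPairing_propagatorDefect_le hV (fun p q => ⟪J p, q⟫) hα₁ hα₂ ha
  have hF₁h := oscillatoryPairing_mul_sub_left (rexp (-α₁ * μ ^ 2)) hφ (hg α₁ hα₁) (hh α₁ hα₁)
    (hh α₂ hα₂)
  rw [← slicedPropagator_eq] at hF₁h
  rw [slicedPropagator_eq α₂, oscillatoryPairing_mul_sub_right _ hφ hF₁ (hg α₂ hα₂) (hh α₂ hα₂)]
  refine (norm_exp_mul_sub_le α₂ hα₂.le _ _).trans ?_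
  rw [hF₁h]
  grw [norm_exp_mul_sub_le α₁ hα₁.le]
  linarith

end SlicedPropagator

def moyalSymplectic : EuclideanSpace ℝ (Fin 4) ≃ₗᵢ[ℝ] EuclideanSpace ℝ (Fin 4) where
  toFun p := !₂[-p 1, p 0, -p 3, p 2]
  invFun p := !₂[p 1, -p 0, p 3, -p 2]
  map_add' p q := by ext i; fin_cases i <;> simp [add_comm]
  map_smul' c p := by ext i; fin_cases i <;> simp
  left_inv p := by ext i; fin_cases i <;> simp
  right_inv p := by ext i; fin_cases i <;> simp
  norm_map' p := by
    simp only [LinearEquiv.coe_mk, LinearMap.coe_mk, AddHom.coe_mk, EuclideanSpace.norm_eq,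
      Real.norm_eq_abs, sq_abs, Fin.sum_univ_four, Matrix.cons_val_zero, Matrix.cons_val_one,
      Matrix.cons_val, neg_sq]
    ring_nf

lemma moyalPhase_eq_inner (p q : EuclideanSpace ℝ (Fin 4)) :
    moyalPhase p q = ⟪moyalSymplectic p, q⟫ := by
  simp only [moyalPhase, moyalSymplectic, LinearIsometryEquiv.coe_mk, LinearEquiv.coe_mk,
    LinearMap.coe_mk, AddHom.coe_mk, PiLp.inner_apply, RCLike.inner_apply, conj_trivial,
    Fin.sum_univ_four, Matrix.cons_val_zero, Matrix.cons_val_one, Matrix.cons_val]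
  ring

end

theorem nonplanar_oscillatory_integral_uniformly_bounded_general (a μ : ℝ) (ha : 0 ≤ a) :
    ∃ K > (0 : ℝ), ∀ α₁ α₂ : ℝ, α₁ ∈ Set.Ioc (0 : ℝ) 1 → α₂ ∈ Set.Ioc (0 : ℝ) 1 →
      ‖∫ p : EuclideanSpace ℝ (Fin 4), ∫ q : EuclideanSpace ℝ (Fin 4),
          Complex.exp (Complex.I * (moyalPhase p q : ℂ)) *
            Real.exp (-α₁ * (‖p‖ ^ 2 + a / ‖p‖ ^ 2 + μ ^ 2)) *
            Real.exp (-α₂ * (‖q‖ ^ 2 + a / ‖q‖ ^ 2 + μ ^ 2))‖ ≤ K := by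
  refine ⟨2 * (2 * π) ^ 4 +
    (2 * a * volume.real (Metric.ball (0 : EuclideanSpace ℝ (Fin 4)) 1)) ^ 2, by positivity, ?_⟩
  rintro α₁ α₂ ⟨hα₁, -⟩ ⟨hα₂, -⟩
  rw [show moyalPhase = fun p q => ⟪moyalSymplectic p, q⟫ from funext₂ moyalPhase_eq_inner]
  exact norm_oscillatoryPairing_slicedPropagator_le (by simp) moyalSymplectic ha hα₁ hα₂

/-- Non-planar power counting gain of the `1/p²` model: the oscillatory double
integral coupling two internal loop momenta through the Moyal phase,
`I(α₁,α₂) = ∫∫ e^{iω(p,q)} e^{-α₁(‖p‖²+a/‖p‖²+μ²)} e^{-α₂(‖q‖²+a/‖q‖²+μ²)} dp dq`,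
is bounded uniformly in the slice parameters `α₁, α₂ ∈ (0,1]`. -/
theorem nonplanar_oscillatory_integral_uniformly_bounded (a μ : ℝ) (ha : 0 ≤ a) (hμ : 0 ≤ μ) :
    ∃ K > (0 : ℝ), ∀ α₁ α₂ : ℝ, α₁ ∈ Set.Ioc (0 : ℝ) 1 → α₂ ∈ Set.Ioc (0 : ℝ) 1 →
      ‖∫ p : EuclideanSpace ℝ (Fin 4), ∫ q : EuclideanSpace ℝ (Fin 4),
          Complex.exp (Complex.I * (moyalPhase p q : ℂ)) *
            Real.exp (-α₁ * (‖p‖ ^ 2 + a / ‖p‖ ^ 2 + μ ^ 2)) *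
            Real.exp (-α₂ * (‖q‖ ^ 2 + a / ‖q‖ ^ 2 + μ ^ 2))‖ ≤ K :=
  nonplanar_oscillatory_integral_uniformly_bounded_general a μ ha
end
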